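/- arXiv:1810.12072 — 2 statements merged into one kernel-verified Lean document; each statement's English description precedes it below -/
import Mathlib

section
/- Let 0 < α < 1. Then lim_{y → +∞} W(−y; −α/2, 1) = 0, where W(−y; −α/2, 1) = ∑_{k=0}^∞ (−y)^k / (k! Γ(−αk/2 + 1)). (This is the decay of the similarity profile at infinity, which yields the far-field boundary condition u₂(x, τ) → (U_∞ − U_s)/(U_0 − U_s) as x → ∞ for the exact solution of the two-phase fractional Stefan problem.) -/
open Real Filter

/-- The two-parameter Wright function `W(z; γ, δ) = ∑ₖ zᵏ / (k! Γ(γk + δ))`,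
where `1/Γ` is the entire reciprocal gamma function (Mathlib's `Real.Gamma`
vanishes at nonpositive integers, so division by it realizes this convention). -/
noncomputable def wright (γ δ z : ℝ) : ℝ :=
  ∑' k : ℕ, z ^ k / ((k.factorial : ℝ) * Real.Gamma (γ * k + δ))

/-!
For `0 < ν < 1` and `k ≥ 1`, the reflection formula `1 / Γ(1 - νk) = sin(πνk) Γ(νk) / π` and
Euler's integral for `Γ(νk)` turn the Wright series into an integral, and summing the exponential
series under the integral sign gives
`W(z; -ν, 1) = 1 + π⁻¹ ∫₀^∞ e^{-t} e^{z tᵛ cos πν} sin (z tᵛ sin πν) dt / t`.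
For `z = -y` the substitution `u = y tᵛ` and dominated convergence show that, as `y → ∞`, this
tends to `1 + (πν)⁻¹ ∫₀^∞ e^{-u cos πν} sin (-u sin πν) du / u = 1 + (πν)⁻¹ arctan (-tan πν) = 0`,
where `cos πν > 0` because `ν = α / 2 < 1 / 2`.
-/

open MeasureTheory Set
open scoped Nat

namespace Real

theorem inv_Gamma_one_sub {x : ℝ} (hx : 0 < x) :
    (Gamma (1 - x))⁻¹ = sin (π * x) * Gamma x / π := by
  have hΓ := Gamma_mul_Gamma_one_sub x
  have hΓx : Gamma x ≠ 0 := (Gamma_pos_of_pos hx).ne'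
  rcases eq_or_ne (sin (π * x)) 0 with hsin | hsin
  · rw [hsin, div_zero, mul_eq_zero] at hΓ
    simp [hsin, hΓ.resolve_left hΓx]
  · have hΓ1 : Gamma (1 - x) = π / sin (π * x) / Gamma x := by
      rw [← hΓ, mul_div_cancel_left₀ _ hΓx]
    rw [hΓ1]
    field_simp

theorem Gamma_add_le_Gamma_mul_rpow {x ν : ℝ} (hx : 0 < x) (hν0 : 0 ≤ ν) (hν1 : ν ≤ 1) :
    Gamma (x + ν) ≤ Gamma x * x ^ ν := by
  rcases hν0.eq_or_lt with rfl | hν0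
  · simp
  rcases hν1.eq_or_lt with rfl | hν1
  · rw [rpow_one, Gamma_add_one hx.ne', mul_comm]
  have key := Gamma_mul_add_mul_le_rpow_Gamma_mul_rpow_Gamma hx (by linarith : 0 < x + 1)
    (sub_pos.2 hν1) hν0 (by ring)
  have hΓx := Gamma_pos_of_pos hx
  calc Gamma (x + ν) = Gamma ((1 - ν) * x + ν * (x + 1)) := by ring_nf
    _ ≤ Gamma x ^ (1 - ν) * Gamma (x + 1) ^ ν := key
    _ = Gamma x * x ^ ν := by
      rw [Gamma_add_one hx.ne', mul_rpow hx.le hΓx.le, ← mul_assoc, mul_comm _ (x ^ ν),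
        mul_assoc, ← rpow_add hΓx, sub_add_cancel, rpow_one, mul_comm]

end Real

/-- By `Real.Gamma_add_le_Gamma_mul_rpow`, consecutive terms have ratio `O(n ^ (ν - 1)) → 0`. -/
theorem summable_pow_mul_Gamma_mul_div_factorial {ν y : ℝ} (hν0 : 0 < ν) (hν1 : ν < 1)
    (hy : 0 ≤ y) : Summable fun n : ℕ => y ^ n * Gamma (ν * n) / n ! := by
  have hdecay : Tendsto (fun n : ℕ => y * (n : ℝ) ^ (ν - 1)) atTop (nhds 0) := by
    have := (tendsto_rpow_neg_atTop (sub_pos.2 hν1)).comp tendsto_natCast_atTop_atTop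
    simpa [neg_sub, Function.comp_def] using this.const_mul y
  refine summable_of_ratio_norm_eventually_le one_half_lt_one ?_
  filter_upwards [hdecay.eventually_le_const one_half_pos, eventually_gt_atTop 0] with n hn hn0
  have hn0' : (0 : ℝ) < n := Nat.cast_pos.2 hn0
  have hx : 0 < ν * n := mul_pos hν0 hn0'
  have hratio : y * (ν * n) ^ ν / (n + 1) ≤ 1 / 2 := calc
    y * (ν * n) ^ ν / (n + 1) ≤ y * (n : ℝ) ^ ν / n := by
      gcongr
      · nlinarith
      · linarith
    _ = y * (n : ℝ) ^ (ν - 1) := by rw [rpow_sub_one hn0'.ne', mul_div_assoc]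
    _ ≤ 1 / 2 := hn
  rw [norm_of_nonneg (by positivity), norm_of_nonneg (by positivity)]
  calc y ^ (n + 1) * Gamma (ν * ↑(n + 1)) / ↑(n + 1)!
      = y ^ (n + 1) * Gamma (ν * n + ν) / ((n + 1) * n !) := by
        push_cast [Nat.factorial_succ]; ring_nf
    _ ≤ y ^ (n + 1) * (Gamma (ν * n) * (ν * n) ^ ν) / ((n + 1) * n !) := by
        gcongr
        exact Gamma_add_le_Gamma_mul_rpow hx hν0.le hν1.le
    _ = y * (ν * n) ^ ν / (n + 1) * (y ^ n * Gamma (ν * n) / n !) := by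
        field_simp; ring
    _ ≤ 1 / 2 * (y ^ n * Gamma (ν * n) / n !) := by gcongr

theorem hasSum_pow_mul_sin_mul_div_factorial (r θ : ℝ) :
    HasSum (fun n : ℕ => r ^ n * sin (n * θ) / n !) (exp (r * cos θ) * sin (r * sin θ)) := by
  have h := Complex.hasSum_im
    (NormedSpace.expSeries_div_hasSum_exp (r * Complex.exp (θ * Complex.I)))
  rw [← Complex.exp_eq_exp_ℂ] at h
  convert h using 1
  · ext n
    rw [mul_pow, ← Complex.exp_nat_mul, ← mul_assoc, ← Complex.ofReal_natCast, ← Complex.ofReal_mul,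
      ← Complex.ofReal_pow, Complex.div_natCast_im, Complex.im_ofReal_mul,
      Complex.exp_ofReal_mul_I_im]
  · rw [Complex.exp_im, Complex.re_ofReal_mul, Complex.im_ofReal_mul, Complex.exp_ofReal_mul_I_re,
      Complex.exp_ofReal_mul_I_im]

theorem hasSum_mul_Gamma {c s : ℕ → ℝ} (hs : ∀ k, 0 < s k)
    (hsum : Summable fun k => |c k| * Gamma (s k)) :
    HasSum (fun k => c k * Gamma (s k)) (∫ t in Ioi 0, exp (-t) * ∑' k, c k * t ^ (s k - 1)) := by
  set F : ℕ → ℝ → ℝ := fun k t => c k * (exp (-t) * t ^ (s k - 1))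
  have hint : ∀ k, IntegrableOn (F k) (Ioi 0) := fun k =>
    (GammaIntegral_convergent (hs k)).const_mul (c k)
  have hnorm : ∀ k, ∫ t in Ioi 0, ‖F k t‖ = |c k| * Gamma (s k) := fun k => by
    rw [Gamma_eq_integral (hs k), ← integral_const_mul]
    refine setIntegral_congr_fun measurableSet_Ioi fun t (ht : 0 < t) => ?_
    rw [norm_mul, norm_eq_abs, norm_of_nonneg (by positivity)]
  have hterm : (fun k => c k * Gamma (s k)) = fun k => ∫ t in Ioi 0, F k t := funext fun k => by
    rw [integral_const_mul, Gamma_eq_integral (hs k)]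
  have hsum_eq : ∀ t, exp (-t) * ∑' k, c k * t ^ (s k - 1) = ∑' k, F k t := fun t => by
    rw [← tsum_mul_left]
    exact tsum_congr fun k => mul_left_comm _ _ _
  simp only [hterm, hsum_eq]
  exact hasSum_integral_of_summable_integral_norm hint (by simpa only [hnorm] using hsum)

theorem wright_neg_one_eq_one_add_integral {ν : ℝ} (hν0 : 0 < ν) (hν1 : ν < 1) (z : ℝ) :
    wright (-ν) 1 z = 1 + π⁻¹ * ∫ t in Ioi 0,
      exp (-t) * (exp (z * t ^ ν * cos (π * ν)) * sin (z * t ^ ν * sin (π * ν))) / t := by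
  set c : ℕ → ℝ := fun k => z ^ (k + 1) * sin (↑(k + 1) * (π * ν)) / ↑(k + 1)!
  set s : ℕ → ℝ := fun k => ν * ↑(k + 1)
  have hs : ∀ k, 0 < s k := fun k => by positivity
  have hterm : ∀ k : ℕ, z ^ (k + 1) / (↑(k + 1)! * Gamma (-ν * ↑(k + 1) + 1))
      = π⁻¹ * (c k * Gamma (s k)) := fun k => by
    rw [show -ν * ↑(k + 1) + 1 = 1 - s k by ring, div_eq_mul_inv, mul_inv,
      inv_Gamma_one_sub (hs k)]
    simp only [c, s]
    ring_nf
  have hsum : Summable fun k => |c k| * Gamma (s k) := by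
    refine .of_nonneg_of_le (fun k => by positivity) (fun k => ?_) ((summable_nat_add_iff 1).2
      (summable_pow_mul_Gamma_mul_div_factorial hν0 hν1 (abs_nonneg z)))
    simp only [c, s, abs_div, abs_mul, abs_pow, Nat.abs_cast]
    calc _ = |z| ^ (k + 1) * Gamma (ν * ↑(k + 1)) / ↑(k + 1)! * |sin (↑(k + 1) * (π * ν))| := by
          ring
      _ ≤ _ := mul_le_of_le_one_right (by positivity) (abs_sin_le_one _)
  have hpoint : ∀ t : ℝ, 0 < t → ∑' k, c k * t ^ (s k - 1)
      = exp (z * t ^ ν * cos (π * ν)) * sin (z * t ^ ν * sin (π * ν)) / t := fun t ht => by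
    have h := ((hasSum_nat_add_iff' 1).2
      (hasSum_pow_mul_sin_mul_div_factorial (z * t ^ ν) (π * ν))).div_const t
    simp only [Finset.range_one, Finset.sum_singleton, CharP.cast_eq_zero, zero_mul, sin_zero,
      mul_zero, zero_div, sub_zero] at h
    refine HasSum.tsum_eq (h.congr_fun fun k => ?_)
    simp only [c, s]
    rw [rpow_sub_one ht.ne', rpow_mul ht.le, rpow_natCast, mul_pow]
    ring
  have hI : ∫ t in Ioi 0, exp (-t) * ∑' k, c k * t ^ (s k - 1) = ∫ t in Ioi 0,
      exp (-t) * (exp (z * t ^ ν * cos (π * ν)) * sin (z * t ^ ν * sin (π * ν))) / t :=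
    setIntegral_congr_fun measurableSet_Ioi fun t ht => by rw [hpoint t ht]; ring
  have htail := (hasSum_mul_Gamma hs hsum).mul_left π⁻¹
  rw [hI, ← funext hterm] at htail
  refine ((hasSum_nat_add_iff' 1).1 ?_).tsum_eq
  simpa using htail

theorem integral_comp_mul_rpow_div {f : ℝ → ℝ} {a p : ℝ} (ha : 0 < a) (hp : 0 < p) :
    ∫ t in Ioi 0, f (a * t ^ p) / t = p⁻¹ * ∫ u in Ioi 0, f u / u := by
  have hpow := integral_comp_rpow_Ioi_of_pos hp (g := fun x => f (a * x) / x)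
  have hlin := integral_comp_mul_left_Ioi (fun u => f u / u) 0 ha
  rw [mul_zero, smul_eq_mul] at hlin
  calc ∫ t in Ioi 0, f (a * t ^ p) / t
      = p⁻¹ * ∫ t in Ioi 0, (p * t ^ (p - 1)) • (f (a * t ^ p) / t ^ p) := by
        rw [← integral_const_mul]
        refine setIntegral_congr_fun measurableSet_Ioi fun t (ht : 0 < t) => ?_
        rw [smul_eq_mul, rpow_sub_one ht.ne']
        field_simp
    _ = p⁻¹ * ∫ u in Ioi 0, a * (f (a * u) / (a * u)) := by
        rw [hpow]
        congr 1
        refine setIntegral_congr_fun measurableSet_Ioi fun u (hu : 0 < u) => ?_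
        field_simp
    _ = p⁻¹ * ∫ u in Ioi 0, f u / u := by
        rw [integral_const_mul, hlin, mul_inv_cancel_left₀ ha.ne']

theorem tendsto_integral_exp_neg_div_rpow_mul {h : ℝ → ℝ} {p : ℝ} (hp : 0 < p)
    (hh : IntegrableOn h (Ioi 0)) :
    Tendsto (fun y => ∫ u in Ioi 0, exp (-((u / y) ^ p)) * h u) atTop
      (nhds (∫ u in Ioi 0, h u)) := by
  refine tendsto_integral_filter_of_dominated_convergence (fun u => |h u|) ?_ ?_ hh.abs ?_
  · refine Eventually.of_forall fun y => ?_
    exact ((Continuous.aestronglyMeasurable (by fun_prop (disch := exact hp.le)))).mul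
      hh.aestronglyMeasurable
  · filter_upwards [eventually_gt_atTop 0] with y hy
    filter_upwards [ae_restrict_mem measurableSet_Ioi] with u (hu : 0 < u)
    rw [norm_mul, norm_of_nonneg (exp_pos _).le, norm_eq_abs]
    refine mul_le_of_le_one_left (abs_nonneg _) (exp_le_one_iff.2 ?_)
    exact neg_nonpos.2 (rpow_nonneg (div_pos hu hy).le _)
  · refine ae_of_all _ fun u => ?_
    have hquot : Tendsto (fun y => (u / y) ^ p) atTop (nhds 0) := by
      simpa [zero_rpow hp.ne', Function.comp_def] using
        ((continuousAt_rpow_const 0 p (Or.inr hp.le)).tendsto.comp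
          (tendsto_const_nhds.div_atTop tendsto_id))
    have hexp := (continuous_exp.tendsto _).comp hquot.neg
    rw [neg_zero, exp_zero] at hexp
    simpa using hexp.mul_const (h u)

section Laplace

variable {c : ℝ}

theorem integrableOn_exp_neg_mul_mul {g : ℝ → ℝ} {M : ℝ} (hc : 0 < c)
    (hg : ContinuousOn g (Ioi 0)) (hgM : ∀ u ∈ Ioi (0 : ℝ), |g u| ≤ M) :
    IntegrableOn (fun u => exp (-(c * u)) * g u) (Ioi 0) := by
  have hexp : IntegrableOn (fun u => exp (-(c * u))) (Ioi 0) := by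
    simpa only [neg_mul] using exp_neg_integrableOn_Ioi 0 hc
  refine hexp.mul_bdd (c := M) (hg.aestronglyMeasurable measurableSet_Ioi) ?_
  filter_upwards [ae_restrict_mem measurableSet_Ioi] with u hu using hgM u hu

theorem integral_exp_neg_mul_mul_cos (hc : 0 < c) (b : ℝ) :
    ∫ u in Ioi 0, exp (-(c * u)) * cos (b * u) = c / (c ^ 2 + b ^ 2) := by
  set a : ℂ := -c + b * Complex.I
  have ha : a.re < 0 := by simpa [a] using hc
  have h := congrArg Complex.re (integral_exp_mul_complex_Ioi ha 0)
  rw [← RCLike.re_to_complex, ← integral_re (integrableOn_exp_mul_complex_Ioi ha 0)] at h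
  convert h using 1
  · congr 1 with u
    simp [a, Complex.exp_re, mul_comm]
  · have : c ^ 2 + b ^ 2 ≠ 0 := by positivity
    simp only [a, Complex.ofReal_zero, mul_zero, Complex.exp_zero, Complex.div_re, Complex.neg_re,
      Complex.one_re, Complex.add_re, Complex.ofReal_re, Complex.mul_re, Complex.I_re,
      Complex.ofReal_im, Complex.I_im, mul_one, sub_self, add_zero, mul_neg, neg_mul, one_mul,
      neg_neg, Complex.normSq_apply, Complex.add_im, Complex.neg_im, neg_zero, Complex.mul_im,
      zero_add, Complex.one_im, zero_mul, zero_div]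
    field_simp

theorem integrableOn_exp_neg_mul_mul_sin_div (hc : 0 < c) (b : ℝ) :
    IntegrableOn (fun u => exp (-(c * u)) * sin (b * u) / u) (Ioi 0) := by
  simp only [mul_div_assoc]
  refine integrableOn_exp_neg_mul_mul hc (M := |b|) (by fun_prop (disch := grind))
    fun u (hu : 0 < u) => ?_
  rw [abs_div, abs_of_pos hu, div_le_iff₀ hu]
  exact abs_sin_le_abs.trans (by rw [abs_mul, abs_of_pos hu])

/-- Both sides vanish at `b = 0` and have derivative `c / (c ^ 2 + b ^ 2)` in `b`. -/
theorem integral_exp_neg_mul_mul_sin_div (hc : 0 < c) (b : ℝ) :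
    ∫ u in Ioi 0, exp (-(c * u)) * sin (b * u) / u = arctan (b / c) := by
  set F : ℝ → ℝ := fun x => ∫ u in Ioi 0, exp (-(c * u)) * sin (x * u) / u
  have hsin := integrableOn_exp_neg_mul_mul_sin_div hc
  have hcos : ∀ x, IntegrableOn (fun u => exp (-(c * u)) * cos (x * u)) (Ioi 0) := fun x =>
    integrableOn_exp_neg_mul_mul hc (M := 1) (by fun_prop) fun u _ => abs_cos_le_one _
  have hexp : IntegrableOn (fun u => exp (-(c * u))) (Ioi 0) := by simpa using hcos 0
  have hF : ∀ x, HasDerivAt F (c / (c ^ 2 + x ^ 2)) x := fun x => by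
    rw [← integral_exp_neg_mul_mul_cos hc x]
    refine (hasDerivAt_integral_of_dominated_loc_of_deriv_le (bound := fun u => exp (-(c * u)))
      (F := fun x u => exp (-(c * u)) * sin (x * u) / u)
      (F' := fun x u => exp (-(c * u)) * cos (x * u))
      univ_mem (.of_forall fun y => (hsin y).aestronglyMeasurable) (hsin x)
      (hcos x).aestronglyMeasurable ?_ hexp ?_).2
    · refine ae_of_all _ fun u y _ => ?_
      rw [norm_mul, norm_of_nonneg (exp_pos _).le]
      exact mul_le_of_le_one_right (exp_pos _).le (abs_cos_le_one _)
    · filter_upwards [ae_restrict_mem measurableSet_Ioi] with u (hu : 0 < u) y _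
      have := ((hasDerivAt_mul_const (x := y) u).sin.const_mul (exp (-(c * u)))).div_const u
      exact this.congr_deriv (by field_simp)
  have hψ : ∀ x, HasDerivAt (fun x => arctan (x / c)) (c / (c ^ 2 + x ^ 2)) x := fun x => by
    convert ((hasDerivAt_id' x).div_const c).arctan using 1
    field_simp
  have hdiff : ∀ x, HasDerivAt (fun x => F x - arctan (x / c)) 0 x := fun x =>
    ((hF x).sub (hψ x)).congr_deriv (sub_self _)
  have hconst := is_const_of_deriv_eq_zero (fun x => (hdiff x).differentiableAt)
    (fun x => (hdiff x).deriv) b 0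
  simpa [F, sub_eq_zero] using hconst

theorem tendsto_integral_exp_neg_mul_rpow_mul_sin {ν : ℝ} (hν : 0 < ν) (hc : 0 < c) (b : ℝ) :
    Tendsto (fun y => ∫ t in Ioi 0, exp (-t) * (exp (-y * t ^ ν * c) * sin (-y * t ^ ν * b)) / t)
      atTop (nhds (arctan (-b / c) / ν)) := by
  have hlim := (tendsto_integral_exp_neg_div_rpow_mul (inv_pos.2 hν)
    (integrableOn_exp_neg_mul_mul_sin_div hc (-b))).const_mul ν⁻¹
  rw [integral_exp_neg_mul_mul_sin_div hc, inv_mul_eq_div] at hlim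
  refine hlim.congr' ?_
  filter_upwards [eventually_gt_atTop 0] with y hy
  set f : ℝ → ℝ := fun u => exp (-((u / y) ^ ν⁻¹)) * (exp (-(c * u)) * sin (-b * u))
  calc ν⁻¹ * ∫ u in Ioi 0, exp (-((u / y) ^ ν⁻¹)) * (exp (-(c * u)) * sin (-b * u) / u)
      = ν⁻¹ * ∫ u in Ioi 0, f u / u := by simp only [f, mul_div_assoc]
    _ = ∫ t in Ioi 0, f (y * t ^ ν) / t := (integral_comp_mul_rpow_div hy hν).symm
    _ = _ := setIntegral_congr_fun measurableSet_Ioi fun t (ht : 0 < t) => by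
        simp only [f]
        rw [mul_div_cancel_left₀ _ hy.ne', rpow_rpow_inv ht.le hν.ne']
        ring_nf

end Laplace

/-- For `0 < α < 1`, the similarity profile decays at infinity:
`W(−y; −α/2, 1) → 0` as `y → +∞`. -/
theorem wright_tendsto_zero_atTop (α : ℝ) (hα : α ∈ Set.Ioo (0:ℝ) 1) :
    Tendsto (fun y : ℝ => wright (-(α / 2)) 1 (-y)) atTop (nhds 0) := by
  obtain ⟨hα0, hα1⟩ := hα
  set ν := α / 2 with hν
  have hν0 : 0 < ν := half_pos hα0
  have hν1 : ν < 1 / 2 := by linarith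
  have hπν : π * ν ∈ Ioo (-(π / 2)) (π / 2) := ⟨by nlinarith [pi_pos], by nlinarith [pi_pos]⟩
  have harctan : arctan (-sin (π * ν) / cos (π * ν)) = -(π * ν) := by
    rw [neg_div, ← tan_eq_sin_div_cos, arctan_neg, arctan_tan hπν.1 hπν.2]
  have hlim := ((tendsto_integral_exp_neg_mul_rpow_mul_sin hν0 (cos_pos_of_mem_Ioo hπν)
    (sin (π * ν))).const_mul π⁻¹).const_add 1
  rw [harctan, show 1 + π⁻¹ * (-(π * ν) / ν) = 0 by field_simp; ring] at hlim
  simpa only [wright_neg_one_eq_one_add_integral hν0 (by linarith)] using hlim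
end

section
/- Let 0 < α < 1, κ₁, κ₂, λ₁, λ₂ > 0, c ∈ ℝ, and assume W(−p/√κ₁; −α/2, 1) ≠ 1 and W(−p/√κ₂; −α/2, 1) ≠ 0. Suppose p > 0 satisfies the transcendental equation p · Γ(1 + α/2)/Γ(1 − α/2) = (λ₂/√κ₂) · c · W(−p/√κ₂; −α/2, 1 − α/2) / W(−p/√κ₂; −α/2, 1) − (λ₁/√κ₁) · W(−p/√κ₁; −α/2, 1 − α/2) / (W(−p/√κ₁; −α/2, 1) − 1). Define S(τ) = p τ^{α/2}, u₁(x, τ) = 1 − (W(−x/(√κ₁ τ^{α/2}); −α/2, 1) − 1)/(W(−p/√κ₁; −α/2, 1) − 1), and u₂(x, τ) = c · (W(−p/√κ₂; −α/2, 1) − W(−x/(√κ₂ τ^{α/2}); −α/2, 1))/W(−p/√κ₂; −α/2, 1). Then for every τ > 0 the fractional Stefan condition holds: ᶜD₀₊^α S(τ) = λ₂ (∂u₂/∂x)(S(τ), τ) − λ₁ (∂u₁/∂x)(S(τ), τ). -/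
open Real MeasureTheory

/-- The left-sided Caputo fractional derivative of order `α ∈ (0,1)`:
`(ᶜD₀₊^α f)(t) = (1/Γ(1−α)) ∫₀ᵗ (t−u)^(−α) f'(u) du`. -/
noncomputable def caputoDeriv (α : ℝ) (f : ℝ → ℝ) (t : ℝ) : ℝ :=
  (1 / Real.Gamma (1 - α)) * ∫ u in (0:ℝ)..t, (t - u) ^ (-α) * deriv f u

/-- The liquid-phase profile
`u₁(x, τ) = 1 − (W(−x/(√κ₁ τ^(α/2)); −α/2, 1) − 1)/(W(−p/√κ₁; −α/2, 1) − 1)`. -/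
noncomputable def liquidProfile (α κ₁ p x τ : ℝ) : ℝ :=
  1 - (wright (-(α / 2)) 1 (-x / (Real.sqrt κ₁ * τ ^ (α / 2))) - 1) /
      (wright (-(α / 2)) 1 (-p / Real.sqrt κ₁) - 1)

/-- The solid-phase profile
`u₂(x, τ) = c (W(−p/√κ₂; −α/2, 1) − W(−x/(√κ₂ τ^(α/2)); −α/2, 1))/W(−p/√κ₂; −α/2, 1)`. -/
noncomputable def solidProfile (α κ₂ p c x τ : ℝ) : ℝ :=
  c * (wright (-(α / 2)) 1 (-p / Real.sqrt κ₂) -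
        wright (-(α / 2)) 1 (-x / (Real.sqrt κ₂ * τ ^ (α / 2)))) /
      wright (-(α / 2)) 1 (-p / Real.sqrt κ₂)

/-! Both sides of the Stefan condition scale like `τ ^ (-(α / 2))`. On the left, the Caputo
derivative of `t ^ m` is `Γ(1 + m) / Γ(1 + m - α) t ^ (m - α)`: the substitution `u = τ x` turns the
Caputo integral into a Beta integral. On the right, `W(z; γ, δ)` is entire for `-1 < γ < 0` (the
reflection formula and Gautschi's inequality make its coefficients decay superexponentially) and
`∂_z W(z; γ, δ) = W(z; γ, γ + δ)`, so the space derivatives of the profiles at `x = S(τ)` are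
`τ ^ (-(α / 2))` times the two terms of the transcendental equation. -/

open Filter Set
open scoped Nat

namespace Real

theorem Gamma_add_le_mul_rpow {x s : ℝ} (hx : 0 < x) (hs0 : 0 < s) (hs1 : s < 1) :
    Gamma (x + s) ≤ Gamma x * x ^ s := by
  have hΓ := Gamma_pos_of_pos hx
  calc Gamma (x + s) = Gamma ((1 - s) * x + s * (x + 1)) := by ring_nf
    _ ≤ Gamma x ^ (1 - s) * Gamma (x + 1) ^ s :=
        Gamma_mul_add_mul_le_rpow_Gamma_mul_rpow_Gamma hx (by linarith) (by linarith) hs0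
          (by ring)
    _ = Gamma x * x ^ s := by
        rw [Gamma_add_one hx.ne', mul_rpow hx.le hΓ.le, mul_left_comm, ← rpow_add hΓ,
          sub_add_cancel, rpow_one, mul_comm]

theorem abs_inv_Gamma_le {x : ℝ} (hx : x < 1) : |(Gamma x)⁻¹| ≤ Gamma (1 - x) / π := by
  have hΓ' := Gamma_pos_of_pos (sub_pos.2 hx)
  rcases eq_or_ne (Gamma x) 0 with h | h
  · rw [h, inv_zero, abs_zero]; positivity
  have hrefl := Gamma_mul_Gamma_one_sub x
  -- at a zero of the sine, `π / 0 = 0` would force `Γ(x) Γ(1 - x) = 0`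
  have hsin : sin (π * x) ≠ 0 := fun hs => mul_ne_zero h hΓ'.ne' (by rw [hrefl, hs, div_zero])
  have hinv : (Gamma x)⁻¹ = sin (π * x) * Gamma (1 - x) / π := by
    have hπ : Gamma x * Gamma (1 - x) * sin (π * x) = π := by rw [hrefl, div_mul_cancel₀ _ hsin]
    field_simp
    linear_combination -hπ
  rw [hinv, abs_div, abs_mul, abs_of_pos pi_pos, abs_of_pos hΓ']
  gcongr
  exact mul_le_of_le_one_left hΓ'.le (abs_sin_le_one _)

theorem integral_rpow_mul_one_sub_rpow {u v : ℝ} (hu : 0 < u) (hv : 0 < v) :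
    ∫ x in (0:ℝ)..1, x ^ (u - 1) * (1 - x) ^ (v - 1) = Gamma u * Gamma v / Gamma (u + v) := by
  have h := Complex.betaIntegral_eq_Gamma_mul_div u v (by simpa) (by simpa)
  rw [Complex.betaIntegral, ← Complex.ofReal_add, Complex.Gamma_ofReal, Complex.Gamma_ofReal,
    Complex.Gamma_ofReal] at h
  apply Complex.ofReal_injective
  rw [← intervalIntegral.integral_ofReal, Complex.ofReal_div, Complex.ofReal_mul, ← h]
  refine intervalIntegral.integral_congr fun x hx => ?_
  rw [uIcc_of_le zero_le_one] at hx
  simp only [Complex.ofReal_mul, Complex.ofReal_cpow hx.1, Complex.ofReal_cpow (sub_nonneg.2 hx.2)]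
  push_cast
  rfl

end Real

theorem summable_pow_mul_Gamma_div_factorial {g : ℝ} (hg0 : 0 < g) (hg1 : g < 1) (e R : ℝ) :
    Summable fun n : ℕ => R ^ n * Gamma (g * n + e) / n ! := by
  refine summable_of_ratio_norm_eventually_le (r := 1 / 2) (by norm_num) ?_
  have hn : Tendsto (fun n : ℕ => (n : ℝ) + 1) atTop atTop :=
    tendsto_atTop_add_const_right _ 1 tendsto_natCast_atTop_atTop
  have hpos : ∀ᶠ n : ℕ in atTop, 0 < g * n + e :=
    (tendsto_atTop_add_const_right _ e
      (tendsto_natCast_atTop_atTop.const_mul_atTop hg0)).eventually_gt_atTop 0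
  have hle : ∀ᶠ n : ℕ in atTop, g * n + e ≤ n + 1 := by
    filter_upwards [(tendsto_natCast_atTop_atTop.const_mul_atTop
      (sub_pos.2 hg1)).eventually_ge_atTop (e - 1)] with n hn
    linarith
  have hR : ∀ᶠ n : ℕ in atTop, 2 * |R| ≤ ((n : ℝ) + 1) ^ (1 - g) :=
    ((tendsto_rpow_atTop (sub_pos.2 hg1)).comp hn).eventually_ge_atTop _
  filter_upwards [hpos, hle, hR] with n hpos hle hR
  set x := g * n + e
  have hn1 : (0 : ℝ) < n + 1 := by positivity
  -- Gautschi's bound makes the ratio of consecutive terms `O(n ^ (g - 1))`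
  have hratio : |R| * Gamma (x + g) ≤ ((n : ℝ) + 1) / 2 * Gamma x := calc
    |R| * Gamma (x + g) ≤ |R| * (Gamma x * x ^ g) := by
        gcongr; exact Gamma_add_le_mul_rpow hpos hg0 hg1
    _ ≤ |R| * (Gamma x * ((n : ℝ) + 1) ^ g) := by gcongr
    _ = 2 * |R| * ((n : ℝ) + 1) ^ g * Gamma x / 2 := by ring
    _ ≤ ((n : ℝ) + 1) ^ (1 - g) * ((n : ℝ) + 1) ^ g * Gamma x / 2 := by gcongr
    _ = ((n : ℝ) + 1) / 2 * Gamma x := by rw [← rpow_add hn1, sub_add_cancel, rpow_one]; ring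
  have hx : g * ((n + 1 : ℕ) : ℝ) + e = x + g := by push_cast; ring
  rw [hx, norm_div, norm_div, norm_mul, norm_mul, norm_pow, norm_pow, Real.norm_of_nonneg
    (Gamma_pos_of_pos hpos).le, Real.norm_of_nonneg (Gamma_pos_of_pos (by linarith)).le,
    Nat.factorial_succ, Real.norm_eq_abs, RCLike.norm_natCast, RCLike.norm_natCast]
  push_cast
  calc |R| ^ (n + 1) * Gamma (x + g) / ((n + 1) * n !)
      = |R| ^ n / ((n + 1) * n !) * (|R| * Gamma (x + g)) := by ring
    _ ≤ |R| ^ n / ((n + 1) * n !) * (((n : ℝ) + 1) / 2 * Gamma x) := by gcongr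
    _ = 1 / 2 * (|R| ^ n * Gamma x / n !) := by field_simp

noncomputable def wrightTerm (γ δ z : ℝ) (n : ℕ) : ℝ := z ^ n / (n ! * Gamma (γ * n + δ))

theorem summable_abs_wrightTerm {γ : ℝ} (hγ : γ ∈ Ioo (-1) 0) (δ z : ℝ) :
    Summable fun n => |wrightTerm γ δ z n| := by
  refine ((summable_pow_mul_Gamma_div_factorial (g := -γ) (by linarith [hγ.2])
    (by linarith [hγ.1]) (1 - δ) |z|).div_const π).of_norm_bounded_eventually_nat ?_
  have hneg : Tendsto (fun n : ℕ => γ * n + δ) atTop atBot :=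
    tendsto_atBot_add_const_right _ δ (tendsto_natCast_atTop_atTop.const_mul_atTop_of_neg hγ.2)
  filter_upwards [hneg.eventually_lt_atBot 1] with n hn
  calc ‖|wrightTerm γ δ z n|‖ = |z| ^ n / n ! * |(Gamma (γ * n + δ))⁻¹| := by
        rw [Real.norm_eq_abs, abs_abs, wrightTerm, abs_div, abs_mul, abs_pow, Nat.abs_cast, abs_inv]
        ring
    _ ≤ |z| ^ n / n ! * (Gamma (1 - (γ * n + δ)) / π) := by gcongr; exact abs_inv_Gamma_le hn
    _ = |z| ^ n * Gamma (-γ * n + (1 - δ)) / n ! / π := by ring_nf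

theorem hasDerivAt_wrightTerm_succ (γ δ z : ℝ) (n : ℕ) :
    HasDerivAt (fun y => wrightTerm γ δ y (n + 1)) (wrightTerm γ (γ + δ) z n) z := by
  refine ((hasDerivAt_pow (n + 1) z).div_const
    (((n + 1)! : ℝ) * Gamma (γ * (n + 1 : ℕ) + δ))).congr_deriv ?_
  rw [wrightTerm, Nat.factorial_succ, Nat.add_sub_cancel]
  push_cast
  rw [show γ * (n + 1) + δ = γ * n + (γ + δ) by ring]
  field_simp

theorem hasDerivAt_wright {γ : ℝ} (hγ : γ ∈ Ioo (-1) 0) (δ z : ℝ) :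
    HasDerivAt (wright γ δ) (wright γ (γ + δ) z) z := by
  set R := |z| + 1
  have hbound : ∀ n y, y ∈ Metric.ball 0 R →
      ‖wrightTerm γ (γ + δ) y n‖ ≤ |wrightTerm γ (γ + δ) R n| := by
    intro n y hy
    rw [mem_ball_zero_iff, Real.norm_eq_abs] at hy
    rw [Real.norm_eq_abs, wrightTerm, wrightTerm, abs_div, abs_div, abs_pow, abs_pow]
    gcongr ?_ / _
    exact pow_le_pow_left₀ (abs_nonneg y) (hy.le.trans (le_abs_self R)) n
  have htail := hasDerivAt_tsum_of_isPreconnected (summable_abs_wrightTerm hγ (γ + δ) R)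
    Metric.isOpen_ball (convex_ball 0 R).isPreconnected
    (fun n y _ => hasDerivAt_wrightTerm_succ γ δ y n) hbound (Metric.mem_ball_self (by positivity))
    (by simp [wrightTerm]) (by rw [mem_ball_zero_iff, Real.norm_eq_abs]; exact lt_add_one _)
  -- splitting off the constant term makes the termwise derivatives of the tail Wright terms again
  have hsplit : wright γ δ = fun y => wrightTerm γ δ y 0 + ∑' n, wrightTerm γ δ y (n + 1) :=
    funext fun y => (summable_abs_wrightTerm hγ δ y).of_abs.tsum_eq_zero_add
  have hconst (y : ℝ) : wrightTerm γ δ y 0 = 1 / Gamma δ := by simp [wrightTerm]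
  simp only [hsplit, hconst]
  exact htail.const_add _

theorem integral_sub_rpow_mul_rpow {a b τ : ℝ} (ha : 0 < a) (hb : 0 < b) (hτ : 0 < τ) :
    ∫ u in (0:ℝ)..τ, (τ - u) ^ (a - 1) * u ^ (b - 1) =
      τ ^ (a + b - 1) * (Gamma a * Gamma b / Gamma (a + b)) := by
  have hscale := intervalIntegral.integral_comp_mul_left
    (fun u => (τ - u) ^ (a - 1) * u ^ (b - 1)) (a := 0) (b := 1) hτ.ne'
  rw [mul_zero, mul_one, smul_eq_mul, eq_inv_mul_iff_mul_eq₀ hτ.ne'] at hscale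
  rw [← hscale, add_comm a b, mul_comm (Gamma a), ← integral_rpow_mul_one_sub_rpow hb ha,
    ← intervalIntegral.integral_const_mul, ← intervalIntegral.integral_const_mul]
  refine intervalIntegral.integral_congr fun x hx => ?_
  rw [uIcc_of_le zero_le_one] at hx
  rw [← mul_one_sub, mul_rpow hτ.le (sub_nonneg.2 hx.2), mul_rpow hτ.le hx.1,
    show b + a - 1 = 1 + (a - 1) + (b - 1) by ring, rpow_add hτ, rpow_add hτ, rpow_one]
  ring

theorem caputoDeriv_congr {α τ : ℝ} {f g : ℝ → ℝ} (hτ : 0 ≤ τ) (h : EqOn f g (Ioi 0)) :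
    caputoDeriv α f τ = caputoDeriv α g τ := by
  unfold caputoDeriv
  congr 1
  refine intervalIntegral.integral_congr_ae (Eventually.of_forall fun u hu => ?_)
  rw [uIoc_of_le hτ] at hu
  rw [(h.eventuallyEq_of_mem (Ioi_mem_nhds hu.1)).deriv_eq]

theorem caputoDeriv_const_mul (α c : ℝ) (f : ℝ → ℝ) (τ : ℝ) :
    caputoDeriv α (fun t => c * f t) τ = c * caputoDeriv α f τ := by
  simp only [caputoDeriv, deriv_const_mul_field', mul_left_comm _ c,
    intervalIntegral.integral_const_mul]

theorem caputoDeriv_rpow {α m τ : ℝ} (hα : α < 1) (hm : 0 < m) (hτ : 0 < τ) :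
    caputoDeriv α (fun t => t ^ m) τ = Gamma (1 + m) / Gamma (1 + m - α) * τ ^ (m - α) := by
  have hbeta := integral_sub_rpow_mul_rpow (sub_pos.2 hα) hm hτ
  rw [sub_sub_cancel_left, show 1 - α + m - 1 = m - α by ring,
    show 1 - α + m = 1 + m - α by ring] at hbeta
  have hΓ : Gamma (1 - α) ≠ 0 := (Gamma_pos_of_pos (sub_pos.2 hα)).ne'
  simp only [caputoDeriv, Real.deriv_rpow_const, mul_left_comm _ m,
    intervalIntegral.integral_const_mul, hbeta, add_comm 1 m, Gamma_add_one hm.ne']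
  field_simp

theorem hasDerivAt_wright_neg_div {γ : ℝ} (hγ : γ ∈ Ioo (-1) 0) (δ L x : ℝ) :
    HasDerivAt (fun y => wright γ δ (-y / L)) (-(wright γ (γ + δ) (-x / L) / L)) x := by
  have h := (hasDerivAt_wright hγ δ (-x / L)).comp x ((hasDerivAt_neg x).div_const L)
  exact h.congr_deriv (by ring)

theorem deriv_liquidProfile {α : ℝ} (hα : α ∈ Ioo 0 2) (κ₁ p x τ : ℝ) :
    deriv (fun y => liquidProfile α κ₁ p y τ) x =
      wright (-(α / 2)) (1 - α / 2) (-x / (√κ₁ * τ ^ (α / 2))) / (√κ₁ * τ ^ (α / 2)) /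
        (wright (-(α / 2)) 1 (-p / √κ₁) - 1) := by
  have hγ : -(α / 2) ∈ Ioo (-1 : ℝ) 0 := ⟨by linarith [hα.2], by linarith [hα.1]⟩
  refine ((((hasDerivAt_wright_neg_div hγ 1 (√κ₁ * τ ^ (α / 2)) x).sub_const 1).div_const
    (wright (-(α / 2)) 1 (-p / √κ₁) - 1)).const_sub 1).deriv.trans ?_
  rw [neg_add_eq_sub]
  ring

theorem deriv_solidProfile {α : ℝ} (hα : α ∈ Ioo 0 2) (κ₂ p c x τ : ℝ) :
    deriv (fun y => solidProfile α κ₂ p c y τ) x =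
      c * wright (-(α / 2)) (1 - α / 2) (-x / (√κ₂ * τ ^ (α / 2))) / (√κ₂ * τ ^ (α / 2)) /
        wright (-(α / 2)) 1 (-p / √κ₂) := by
  have hγ : -(α / 2) ∈ Ioo (-1 : ℝ) 0 := ⟨by linarith [hα.2], by linarith [hα.1]⟩
  refine ((((hasDerivAt_wright_neg_div hγ 1 (√κ₂ * τ ^ (α / 2)) x).const_sub
    (wright (-(α / 2)) 1 (-p / √κ₂))).const_mul c).div_const
    (wright (-(α / 2)) 1 (-p / √κ₂))).deriv.trans ?_
  rw [neg_add_eq_sub]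
  ring

theorem fractional_stefan_condition_general (α κ₁ κ₂ lam₁ lam₂ c p : ℝ)
    (hα : α ∈ Set.Ioo (0:ℝ) 1)
    (htrans : p * (Real.Gamma (1 + α / 2) / Real.Gamma (1 - α / 2)) =
        (lam₂ / Real.sqrt κ₂) * c *
            (wright (-(α / 2)) (1 - α / 2) (-p / Real.sqrt κ₂) /
              wright (-(α / 2)) 1 (-p / Real.sqrt κ₂)) -
          (lam₁ / Real.sqrt κ₁) *
            (wright (-(α / 2)) (1 - α / 2) (-p / Real.sqrt κ₁) /
              (wright (-(α / 2)) 1 (-p / Real.sqrt κ₁) - 1)))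
    (S : ℝ → ℝ) (hS : ∀ τ : ℝ, 0 ≤ τ → S τ = p * τ ^ (α / 2)) :
    ∀ τ : ℝ, 0 < τ →
      caputoDeriv α S τ =
        lam₂ * deriv (fun y => solidProfile α κ₂ p c y τ) (S τ) -
          lam₁ * deriv (fun y => liquidProfile α κ₁ p y τ) (S τ) := by
  intro τ hτ
  have hα₂ : α ∈ Ioo (0 : ℝ) 2 := ⟨hα.1, by linarith [hα.2]⟩
  have hscaled (κ : ℝ) : -S τ / (√κ * τ ^ (α / 2)) = -p / √κ := by
    rw [hS τ hτ.le, mul_comm √κ, ← div_div, neg_div, mul_div_cancel_right₀ _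
      (rpow_pos_of_pos hτ _).ne']
  calc caputoDeriv α S τ = p * caputoDeriv α (fun t => t ^ (α / 2)) τ := by
        rw [← caputoDeriv_const_mul]
        exact caputoDeriv_congr hτ.le fun t ht => hS t (le_of_lt ht)
    _ = τ ^ (-(α / 2)) * (p * (Gamma (1 + α / 2) / Gamma (1 - α / 2))) := by
        rw [caputoDeriv_rpow hα.2 (by linarith [hα.1]) hτ]
        ring_nf
    _ = _ := by
        rw [htrans, deriv_solidProfile hα₂, deriv_liquidProfile hα₂, hscaled, hscaled,
          rpow_neg hτ.le]
        ring

/-- If `p > 0` solves the transcendental equation of Roscani–Tarzia, then the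
triple `(u₁, u₂, S)` with `S(τ) = p τ^(α/2)` satisfies the fractional Stefan
condition `ᶜD₀₊^α S(τ) = lam₂ ∂u₂/∂x(S(τ), τ) − lam₁ ∂u₁/∂x(S(τ), τ)` for `τ > 0`. -/
theorem fractional_stefan_condition (α κ₁ κ₂ lam₁ lam₂ c p : ℝ)
    (hα : α ∈ Set.Ioo (0:ℝ) 1) (hκ₁ : 0 < κ₁) (hκ₂ : 0 < κ₂)
    (hlam₁ : 0 < lam₁) (hlam₂ : 0 < lam₂) (hp : 0 < p)
    (hW₁ : wright (-(α / 2)) 1 (-p / Real.sqrt κ₁) ≠ 1)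
    (hW₂ : wright (-(α / 2)) 1 (-p / Real.sqrt κ₂) ≠ 0)
    (htrans : p * (Real.Gamma (1 + α / 2) / Real.Gamma (1 - α / 2)) =
        (lam₂ / Real.sqrt κ₂) * c *
            (wright (-(α / 2)) (1 - α / 2) (-p / Real.sqrt κ₂) /
              wright (-(α / 2)) 1 (-p / Real.sqrt κ₂)) -
          (lam₁ / Real.sqrt κ₁) *
            (wright (-(α / 2)) (1 - α / 2) (-p / Real.sqrt κ₁) /
              (wright (-(α / 2)) 1 (-p / Real.sqrt κ₁) - 1)))
    (S : ℝ → ℝ) (hS : ∀ τ : ℝ, 0 ≤ τ → S τ = p * τ ^ (α / 2)) :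
    ∀ τ : ℝ, 0 < τ →
      caputoDeriv α S τ =
        lam₂ * deriv (fun y => solidProfile α κ₂ p c y τ) (S τ) -
          lam₁ * deriv (fun y => liquidProfile α κ₁ p y τ) (S τ) :=
  fractional_stefan_condition_general α κ₁ κ₂ lam₁ lam₂ c p hα htrans S hS
end
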